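/- For t > 0, j ∈ {1,…,n}, and any f : {−1,1}ⁿ → ℝ, the discrete derivative of the heat semigroup satisfies D_j P_t f(x) = (e^{2t}−1)^{−1/2} · E[δ_j(t) f(x₁ξ₁(t),…,xₙξₙ(t))], where δ_j(t) = (ξ_j(t) − e^{−t})/√(1−e^{−2t}). -/

import Mathlib

open Real MeasureTheory Finset

noncomputable section

/-- Sign of a boolean: `true ↦ 1`, `false ↦ -1`. -/
def sgn (b : Bool) : ℝ := if b then 1 else -1

/-- Flip the `j`-th coordinate of a point of the discrete cube `{-1,1}ⁿ`. -/
def flip' {n : ℕ} (j : Fin n) (x : Fin n → Bool) : Fin n → Bool :=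
  Function.update x j (!(x j))

/-- Discrete partial derivative `D_j f(ε) = (f(ε) - f(ε^{(j)}))/2`. -/
def D {n : ℕ} (j : Fin n) (f : (Fin n → Bool) → ℝ) : (Fin n → Bool) → ℝ :=
  fun x => (f x - f (flip' j x)) / 2

/-- `D_j` as a linear map. -/
def DL (n : ℕ) (j : Fin n) : ((Fin n → Bool) → ℝ) →ₗ[ℝ] ((Fin n → Bool) → ℝ) where
  toFun := D j
  map_add' f g := by funext x; simp [D]; ring
  map_smul' c f := by funext x; simp [D]; ring

/-- The discrete Laplacian `Δ = -∑ⱼ Dⱼ` as a continuous linear map. -/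
def Lap (n : ℕ) : ((Fin n → Bool) → ℝ) →L[ℝ] ((Fin n → Bool) → ℝ) :=
  LinearMap.toContinuousLinearMap (-(∑ j : Fin n, DL n j))

/-- The heat semigroup `P_t = e^{tΔ}` on the discrete cube. -/
def P (n : ℕ) (t : ℝ) : ((Fin n → Bool) → ℝ) →L[ℝ] ((Fin n → Bool) → ℝ) :=
  NormedSpace.exp (t • Lap n)

/-- The weight of the biased product measure: probability of `ξ(t) = ξ`. -/
def w (n : ℕ) (t : ℝ) (ξ : Fin n → Bool) : ℝ :=
  ∏ i : Fin n, (1 + Real.exp (-t) * sgn (ξ i)) / 2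

/-- The standardized variable `δ_j(t) = (ξ_j(t) - e^{-t})/√(1-e^{-2t})`. -/
def del (t : ℝ) (b : Bool) : ℝ := (sgn b - Real.exp (-t)) / Real.sqrt (1 - Real.exp (-2 * t))

/-- Coordinatewise product of two points of the cube. -/
def cmul {n : ℕ} (x ξ : Fin n → Bool) : Fin n → Bool := fun i => x i == ξ i

/-!
The `D_j` are commuting idempotents, so `P_t = ∏ⱼ exp(-t D_j)` and
`exp(-t D_j) = 1 - (1 - e^{-t}) D_j` averages `f` and `f ∘ flip' j` with weights
`(1 ± e^{-t})/2`.
Applying these factors one coordinate at a time gives `P_t f x = E f(x ξ(t))`. A flip of `x_j`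
can be moved onto `ξ_j`, so `D_j P_t f x` only sees the difference of the two weights of `ξ_j`,
which is `(e^{2t} - 1)^{-1/2}` times the weight of `ξ_j` times `δ_j`.
-/

open NormedSpace in
theorem NormedSpace.exp_smul_of_isIdempotentElem {A : Type*} [NormedRing A] [NormedAlgebra ℝ A]
    [CompleteSpace A] (c : ℝ) {e : A} (he : IsIdempotentElem e) :
    exp (c • e) = 1 + (Real.exp c - 1) • e := by
  have hterm : ∀ k : ℕ, (k.factorial⁻¹ : ℝ) • (c • e) ^ k
      = ((k.factorial⁻¹ : ℝ) • c ^ k) • e + if k = 0 then 1 - e else 0 := by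
    rintro (_ | k)
    · simp
    · simp [smul_pow, he.pow_succ_eq, smul_smul]
  have hsum : HasSum (fun k : ℕ => (k.factorial⁻¹ : ℝ) • (c • e) ^ k)
      (Real.exp c • e + (1 - e)) := by
    simp only [hterm]
    refine HasSum.add (HasSum.smul_const ?_ e) (hasSum_ite_eq 0 (1 - e))
    rw [Real.exp_eq_exp_ℝ]
    exact exp_series_hasSum_exp' c
  rw [(exp_series_hasSum_exp' (𝕂 := ℝ) (c • e)).unique hsum, sub_smul, one_smul]
  abel

section Cube

variable {n : ℕ}

lemma flip'_apply_self (j : Fin n) (x : Fin n → Bool) : flip' j x j = !(x j) := by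
  simp [flip']

lemma flip'_apply_of_ne {i j : Fin n} (h : i ≠ j) (x : Fin n → Bool) : flip' j x i = x i :=
  Function.update_of_ne h _ _

lemma flip'_involutive (j : Fin n) : Function.Involutive (flip' j) := by
  intro x
  funext i
  rcases eq_or_ne i j with rfl | h
  · simp [flip'_apply_self]
  · simp [flip'_apply_of_ne h]

lemma flip'_comm (i j : Fin n) (x : Fin n → Bool) :
    flip' i (flip' j x) = flip' j (flip' i x) := by
  rcases eq_or_ne i j with rfl | hij
  · rfl
  · simp only [flip', Function.update_of_ne hij, Function.update_of_ne hij.symm,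
      Function.update_comm hij.symm]

lemma cmul_flip' (j : Fin n) (x ξ : Fin n → Bool) :
    cmul (flip' j x) ξ = cmul x (flip' j ξ) := by
  funext i
  rcases eq_or_ne i j with rfl | h
  · simp only [cmul, flip'_apply_self]
    cases x i <;> cases ξ i <;> rfl
  · simp [cmul, flip'_apply_of_ne h]

lemma cmul_true (x : Fin n → Bool) : cmul x (fun _ => true) = x := by
  funext i
  simp [cmul]

lemma sum_mul_cmul_flip' (j : Fin n) (g f : (Fin n → Bool) → ℝ) (x : Fin n → Bool) :
    ∑ ξ, g ξ * f (cmul (flip' j x) ξ) = ∑ ξ, g (flip' j ξ) * f (cmul x ξ) := by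
  rw [← Equiv.sum_comp (flip'_involutive j).toPerm]
  simp [cmul_flip', flip'_involutive j _]

lemma prod_apply_flip' (j : Fin n) (g : Fin n → Bool → ℝ) (ξ : Fin n → Bool) :
    ∏ i, g i (flip' j ξ i) = g j (!ξ j) * ∏ i ∈ univ.erase j, g i (ξ i) := by
  rw [← mul_prod_erase univ _ (mem_univ j), flip'_apply_self]
  congr 1
  exact prod_congr rfl fun i hi => by rw [flip'_apply_of_ne (ne_of_mem_erase hi)]

def Dc (n : ℕ) (j : Fin n) : ((Fin n → Bool) → ℝ) →L[ℝ] ((Fin n → Bool) → ℝ) :=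
  LinearMap.toContinuousLinearMap (DL n j)

lemma Dc_apply (j : Fin n) (f : (Fin n → Bool) → ℝ) (x : Fin n → Bool) :
    Dc n j f x = (f x - f (flip' j x)) / 2 := rfl

lemma isIdempotentElem_Dc (j : Fin n) : IsIdempotentElem (Dc n j) := by
  ext f x
  simp only [mul_apply_eq_comp, Dc_apply, flip'_involutive j _]
  ring

lemma commute_Dc (i j : Fin n) : Commute (Dc n i) (Dc n j) := by
  ext f x
  simp only [mul_apply_eq_comp, Dc_apply, flip'_comm]
  ring

lemma smul_Lap_eq_sum (t : ℝ) : t • Lap n = ∑ j, (-t) • Dc n j := by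
  ext f x
  simp [Lap, Dc, DL, D, mul_sum]

lemma exp_neg_smul_Dc_apply (t : ℝ) (j : Fin n) (f : (Fin n → Bool) → ℝ)
    (x : Fin n → Bool) :
    NormedSpace.exp ((-t) • Dc n j) f x
      = (1 + Real.exp (-t)) / 2 * f x + (1 - Real.exp (-t)) / 2 * f (flip' j x) := by
  rw [NormedSpace.exp_smul_of_isIdempotentElem _ (isIdempotentElem_Dc j)]
  simp only [add_apply, one_apply_eq_self, smul_apply, Dc_apply, Pi.add_apply, Pi.smul_apply,
    smul_eq_mul]
  ring

def bitWeight (t : ℝ) (b : Bool) : ℝ := (1 + Real.exp (-t) * sgn b) / 2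

lemma w_eq_prod_bitWeight (n : ℕ) (t : ℝ) (ξ : Fin n → Bool) :
    w n t ξ = ∏ i, bitWeight t (ξ i) := rfl

def noiseFactor (t : ℝ) (s : Finset (Fin n)) (i : Fin n) (b : Bool) : ℝ :=
  if i ∈ s then bitWeight t b else if b then 1 else 0

/-- The law of `ξ(t)` when only the coordinates in `s` are noised, the others being pinned to
`true`, i.e. to `+1`. -/
def noiseWeight (t : ℝ) (s : Finset (Fin n)) (ξ : Fin n → Bool) : ℝ :=
  ∏ i, noiseFactor t s i (ξ i)

lemma sum_noiseWeight_empty_mul (t : ℝ) (f : (Fin n → Bool) → ℝ) (x : Fin n → Bool) :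
    ∑ ξ, noiseWeight t ∅ ξ * f (cmul x ξ) = f x := by
  rw [Fintype.sum_eq_single (fun _ => true)]
  · simp [noiseWeight, noiseFactor, cmul_true]
  · intro ξ hξ
    obtain ⟨i, hi⟩ : ∃ i, ξ i = false := by
      by_contra! h
      exact hξ (funext fun i => by simpa using h i)
    simp [noiseWeight, noiseFactor, prod_eq_zero (mem_univ i), hi]

lemma noiseWeight_cons (t : ℝ) (a : Fin n) (s : Finset (Fin n)) (ha : a ∉ s)
    (ξ : Fin n → Bool) :
    noiseWeight t (cons a s ha) ξ = (1 + Real.exp (-t)) / 2 * noiseWeight t s ξ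
      + (1 - Real.exp (-t)) / 2 * noiseWeight t s (flip' a ξ) := by
  rw [noiseWeight, noiseWeight, noiseWeight, prod_apply_flip',
    ← mul_prod_erase univ _ (mem_univ a), ← mul_prod_erase univ _ (mem_univ a)]
  have herase : ∏ i ∈ univ.erase a, noiseFactor t (cons a s ha) i (ξ i)
      = ∏ i ∈ univ.erase a, noiseFactor t s i (ξ i) :=
    prod_congr rfl fun i hi => by simp [noiseFactor, ne_of_mem_erase hi]
  rw [herase]
  generalize ∏ i ∈ univ.erase a, noiseFactor t s i (ξ i) = R
  cases ξ a <;> simp only [noiseFactor, bitWeight, mem_cons_self, ha, if_true, if_false, sgn,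
    Bool.not_true, Bool.not_false, Bool.false_eq_true] <;> ring

lemma exp_sum_neg_smul_Dc_apply (t : ℝ) (s : Finset (Fin n)) (f : (Fin n → Bool) → ℝ)
    (x : Fin n → Bool) :
    NormedSpace.exp (∑ j ∈ s, (-t) • Dc n j) f x
      = ∑ ξ, noiseWeight t s ξ * f (cmul x ξ) := by
  induction s using Finset.cons_induction generalizing x with
  | empty => simp [sum_noiseWeight_empty_mul]
  | cons a s ha ih =>
    have hcomm : Commute ((-t) • Dc n a) (∑ j ∈ s, (-t) • Dc n j) :=
      Commute.sum_right _ _ _ fun j _ => ((commute_Dc a j).smul_left _).smul_right _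
    -- `exp_add_of_commute` would need a `NormedAlgebra ℚ` instance on the operator algebra
    rw [sum_cons, NormedSpace.exp_add_of_commute_of_mem_ball (𝕂 := ℝ) hcomm
      (by simp [NormedSpace.expSeries_radius_eq_top])
      (by simp [NormedSpace.expSeries_radius_eq_top]),
      mul_apply_eq_comp, exp_neg_smul_Dc_apply, ih, ih, sum_mul_cmul_flip',
      mul_sum, mul_sum, ← sum_add_distrib]
    simp only [noiseWeight_cons, add_mul, mul_assoc]

theorem P_apply (t : ℝ) (f : (Fin n → Bool) → ℝ) (x : Fin n → Bool) :
    P n t f x = ∑ ξ, w n t ξ * f (cmul x ξ) := by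
  rw [P, smul_Lap_eq_sum, exp_sum_neg_smul_Dc_apply]
  simp [noiseWeight, noiseFactor, w_eq_prod_bitWeight]

lemma sqrt_one_sub_exp_neg_two_mul (t : ℝ) :
    √(1 - Real.exp (-2 * t)) = Real.exp (-t) * √(Real.exp (2 * t) - 1) := by
  have h : 1 - Real.exp (-2 * t) = Real.exp (-t) ^ 2 * (Real.exp (2 * t) - 1) := by
    rw [mul_sub, mul_one, sq, ← Real.exp_add, ← Real.exp_add, show -t + -t + 2 * t = 0 by ring,
      show -t + -t = -2 * t by ring, Real.exp_zero]
  rw [h, Real.sqrt_mul (sq_nonneg _), Real.sqrt_sq (Real.exp_pos _).le]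

lemma bitWeight_sub_bitWeight_not {t : ℝ} (ht : 0 < t) (b : Bool) :
    (bitWeight t b - bitWeight t (!b)) / 2
      = (√(Real.exp (2 * t) - 1))⁻¹ * (bitWeight t b * del t b) := by
  have hpos : 0 < Real.exp (2 * t) - 1 := sub_pos.mpr (Real.one_lt_exp_iff.mpr (by linarith))
  have hS : 0 < √(Real.exp (2 * t) - 1) := Real.sqrt_pos.mpr hpos
  have hS2 : √(Real.exp (2 * t) - 1) ^ 2 = Real.exp (2 * t) - 1 := Real.sq_sqrt hpos.le
  have hexp : Real.exp (-t) ^ 2 * Real.exp (2 * t) = 1 := by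
    rw [sq, ← Real.exp_add, ← Real.exp_add, show -t + -t + 2 * t = 0 by ring, Real.exp_zero]
  have he : 0 < Real.exp (-t) := Real.exp_pos _
  rw [del, sqrt_one_sub_exp_neg_two_mul]
  cases b <;> simp only [bitWeight, sgn, Bool.not_true, Bool.not_false, Bool.false_eq_true,
    if_true, if_false] <;> generalize √(Real.exp (2 * t) - 1) = S at * <;>
    generalize Real.exp (-t) = e at * <;> field_simp
  · linear_combination (-2 * e ^ 2) * hS2 - 2 * hexp
  · linear_combination (2 * e ^ 2) * hS2 + 2 * hexp

lemma w_sub_w_flip' {t : ℝ} (ht : 0 < t) (j : Fin n) (ξ : Fin n → Bool) :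
    (w n t ξ - w n t (flip' j ξ)) / 2
      = (√(Real.exp (2 * t) - 1))⁻¹ * (w n t ξ * del t (ξ j)) := by
  rw [w_eq_prod_bitWeight, w_eq_prod_bitWeight, prod_apply_flip' j (fun _ => bitWeight t),
    ← mul_prod_erase univ _ (mem_univ j)]
  linear_combination
    (∏ i ∈ univ.erase j, bitWeight t (ξ i)) * bitWeight_sub_bitWeight_not ht (ξ j)

end Cube

/-- gradient of the heat semigroup. -/
theorem stmt2 (n : ℕ) (t : ℝ) (ht : 0 < t) (j : Fin n) (f : (Fin n → Bool) → ℝ)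
    (x : Fin n → Bool) :
    D j (P n t f) x =
      (Real.sqrt (Real.exp (2*t) - 1))⁻¹ *
        ∑ ξ : Fin n → Bool, w n t ξ * (del t (ξ j) * f (cmul x ξ)) := by
  rw [D, P_apply, P_apply, sum_mul_cmul_flip', ← sum_sub_distrib, sum_div, mul_sum]
  refine sum_congr rfl fun ξ _ => ?_
  linear_combination f (cmul x ξ) * w_sub_w_flip' ht j ξ

end
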